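/- arXiv:2305.06797 — 2 statements merged into one kernel-verified Lean document; each statement's English description precedes it below -/
import Mathlib

section
/- For every α, β ∈ [0,n), j ∈ ℕ₀, every nonnegative measurable f on (0,∞), and every t ∈ (0,∞): (R_β ∘ R_α^j) f(t) = (φ_β(t)/j!) ∫_0^t f(s) (∫_s^t φ_α)^j ds, and (H_α^j ∘ H_β) f(t) = (1/j!) ∫_t^∞ f(s) φ_β(s) (∫_t^s φ_α)^j ds. -/
open MeasureTheory Set Real
open scoped ENNReal

noncomputable def phi (n : ℕ) (γ : ℝ) (t : ℝ) : ℝ := min (t ^ (-1 + γ / n)) t⁻¹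

noncomputable def Rop (n : ℕ) (γ : ℝ) (f : ℝ → ℝ≥0∞) (t : ℝ) : ℝ≥0∞ :=
  ENNReal.ofReal (phi n γ t) * ∫⁻ s in Set.Ioo (0 : ℝ) t, f s

noncomputable def Hop (n : ℕ) (γ : ℝ) (f : ℝ → ℝ≥0∞) (t : ℝ) : ℝ≥0∞ :=
  ∫⁻ s in Set.Ioi t, f s * ENNReal.ofReal (phi n γ s)

/-! Both identities are proved by induction on `j`. With `Φ(s, t) = ∫_s^t φ_α`, the induction
step exchanges the order of integration over a triangle (Tonelli) and then evaluates the inner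
integral by `∫_u^t φ_α(s) Φ(s, t)^j ds = Φ(u, t)^(j+1) / (j+1)`, the fundamental theorem of
calculus for `-Φ(·, t)^(j+1) / (j+1)`; this is where the `1 / j!` comes from. -/

section

variable {μ : Measure ℝ} [SFinite μ]

theorem lintegral_lintegral_Iio_eq_lintegral_lintegral_Ioi {F : ℝ → ℝ → ℝ≥0∞}
    (hF : Measurable (Function.uncurry F)) :
    ∫⁻ x, ∫⁻ y in Iio x, F x y ∂μ ∂μ = ∫⁻ y, ∫⁻ x in Ioi y, F x y ∂μ ∂μ := by
  simp_rw [← lintegral_indicator measurableSet_Iio, ← lintegral_indicator measurableSet_Ioi,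
    indicator_apply, mem_Iio, mem_Ioi]
  exact lintegral_lintegral_swap
    ((hF.ite (measurableSet_lt measurable_snd measurable_fst) measurable_const).aemeasurable)

theorem measurable_setLIntegral_Ioo {g : ℝ → ℝ≥0∞} (hg : Measurable g) :
    Measurable fun p : ℝ × ℝ => ∫⁻ x in Ioo p.1 p.2, g x ∂μ := by
  simp_rw [← lintegral_indicator measurableSet_Ioo]
  exact Measurable.lintegral_prod_right'
    (f := fun q : (ℝ × ℝ) × ℝ => (Ioo q.1.1 q.1.2).indicator g q.2)
    ((hg.comp measurable_snd).indicator
      ((measurableSet_lt (measurable_fst.comp measurable_fst) measurable_snd).inter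
        (measurableSet_lt measurable_snd (measurable_snd.comp measurable_fst))))

end

theorem lintegral_Ioo_lintegral_Ioo_swap {F : ℝ → ℝ → ℝ≥0∞}
    (hF : Measurable (Function.uncurry F)) (a b : ℝ) :
    ∫⁻ x in Ioo a b, ∫⁻ y in Ioo a x, F x y = ∫⁻ y in Ioo a b, ∫⁻ x in Ioo y b, F x y := by
  have := lintegral_lintegral_Iio_eq_lintegral_lintegral_Ioi (μ := volume.restrict (Ioo a b)) hF
  simp only [Measure.restrict_restrict measurableSet_Iio,
    Measure.restrict_restrict measurableSet_Ioi] at this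
  convert this using 1
  · refine setLIntegral_congr_fun measurableSet_Ioo fun x hx => ?_
    rw [Iio_inter_Ioo, min_eq_left hx.2.le]
  · refine setLIntegral_congr_fun measurableSet_Ioo fun y hy => ?_
    rw [Ioi_inter_Ioo, max_eq_left hy.1.le]

theorem lintegral_Ioi_lintegral_Ioi_swap {F : ℝ → ℝ → ℝ≥0∞}
    (hF : Measurable (Function.uncurry F)) (a : ℝ) :
    ∫⁻ x in Ioi a, ∫⁻ y in Ioi x, F x y = ∫⁻ y in Ioi a, ∫⁻ x in Ioo a y, F x y := by
  have := lintegral_lintegral_Iio_eq_lintegral_lintegral_Ioi (μ := volume.restrict (Ioi a))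
    (F := fun y x => F x y) (hF.comp measurable_swap)
  simp only [Measure.restrict_restrict measurableSet_Iio,
    Measure.restrict_restrict measurableSet_Ioi] at this
  convert this.symm using 1
  · refine setLIntegral_congr_fun measurableSet_Ioi fun x hx => ?_
    rw [Ioi_inter_Ioi, max_eq_left hx.le]
  · refine setLIntegral_congr_fun measurableSet_Ioi fun y hy => ?_
    rw [Iio_inter_Ioi, Ioo]

theorem continuousOn_intervalIntegral_left {g : ℝ → ℝ} {a b : ℝ} (hab : a ≤ b)
    (hg : ContinuousOn g (Icc a b)) : ContinuousOn (fun s => ∫ x in s..b, g x) (Icc a b) := by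
  simpa only [uIcc_of_le hab] using intervalIntegral.continuousOn_primitive_interval_left
    (hg.integrableOn_Icc.mono_set (uIcc_of_le hab).subset)

theorem integral_mul_integral_pow_eq {g : ℝ → ℝ} {a b : ℝ} (hab : a ≤ b)
    (hg : ContinuousOn g (Icc a b)) (j : ℕ) :
    ∫ s in a..b, g s * (∫ x in s..b, g x) ^ j = (∫ x in a..b, g x) ^ (j + 1) / (j + 1) := by
  set Φ : ℝ → ℝ := fun s => ∫ x in s..b, g x
  have hΦ : ContinuousOn Φ (Icc a b) := continuousOn_intervalIntegral_left hab hg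
  have hderiv : ∀ s ∈ Ioo a b, HasDerivAt Φ (-g s) s := fun s hs =>
    intervalIntegral.integral_hasDerivAt_left
      ((hg.mono (Icc_subset_Icc hs.1.le le_rfl)).intervalIntegrable_of_Icc hs.2.le)
      ((hg.mono Ioo_subset_Icc_self).stronglyMeasurableAtFilter isOpen_Ioo s hs)
      (hg.continuousAt (Icc_mem_nhds hs.1 hs.2))
  have hF : ∀ s ∈ Ioo a b,
      HasDerivAt (fun y => -(Φ y ^ (j + 1) / (j + 1))) (g s * Φ s ^ j) s := by
    intro s hs
    refine (((hderiv s hs).fun_pow (j + 1)).div_const (j + 1 : ℝ)).neg.congr_deriv ?_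
    rw [Nat.add_sub_cancel]
    push_cast
    field_simp
  have hint : IntervalIntegrable (fun s => g s * Φ s ^ j) volume a b :=
    (hg.mul (hΦ.pow j)).intervalIntegrable_of_Icc hab
  rw [intervalIntegral.integral_eq_sub_of_hasDerivAt_of_le hab
    (hΦ.pow (j + 1) |>.div_const _ |>.neg) hF hint]
  simp [Φ]

theorem ofReal_setIntegral_eq_setLIntegral_ofReal {α : Type*} [MeasurableSpace α]
    {μ : Measure α} {s : Set α} {g : α → ℝ} (hs : MeasurableSet s) (hg : IntegrableOn g s μ)
    (hg0 : ∀ x ∈ s, 0 ≤ g x) :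
    ENNReal.ofReal (∫ x in s, g x ∂μ) = ∫⁻ x in s, ENNReal.ofReal (g x) ∂μ :=
  ofReal_integral_eq_lintegral_ofReal hg (ae_restrict_of_forall_mem hs hg0)

theorem ofReal_intervalIntegral_eq_setLIntegral_Ioo {g : ℝ → ℝ} {a b : ℝ} (hab : a ≤ b)
    (hg : ContinuousOn g (Icc a b)) (hg0 : ∀ x ∈ Icc a b, 0 ≤ g x) :
    ENNReal.ofReal (∫ x in a..b, g x) = ∫⁻ x in Ioo a b, ENNReal.ofReal (g x) := by
  rw [intervalIntegral.integral_of_le hab, integral_Ioc_eq_integral_Ioo,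
    ofReal_setIntegral_eq_setLIntegral_ofReal measurableSet_Ioo
      (hg.integrableOn_Icc.mono_set Ioo_subset_Icc_self) fun x hx => hg0 x (Ioo_subset_Icc_self hx)]

theorem setLIntegral_ofReal_mul_pow_eq {g : ℝ → ℝ} {a b : ℝ} (hab : a ≤ b)
    (hg : ContinuousOn g (Icc a b)) (hg0 : ∀ x ∈ Icc a b, 0 ≤ g x) (j : ℕ) :
    ∫⁻ s in Ioo a b, ENNReal.ofReal (g s) * (∫⁻ x in Ioo s b, ENNReal.ofReal (g x)) ^ j =
      ((j : ℝ≥0∞) + 1)⁻¹ * (∫⁻ x in Ioo a b, ENNReal.ofReal (g x)) ^ (j + 1) := by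
  have hsub {s : ℝ} (hs : s ∈ Icc a b) : Icc s b ⊆ Icc a b := Icc_subset_Icc_left hs.1
  have hΦ0 {s : ℝ} (hs : s ∈ Icc a b) : 0 ≤ ∫ x in s..b, g x :=
    intervalIntegral.integral_nonneg hs.2 fun x hx => hg0 x (hsub hs hx)
  have hΦ {s : ℝ} (hs : s ∈ Icc a b) :
      ∫⁻ x in Ioo s b, ENNReal.ofReal (g x) = ENNReal.ofReal (∫ x in s..b, g x) :=
    (ofReal_intervalIntegral_eq_setLIntegral_Ioo hs.2 (hg.mono (hsub hs))
      fun x hx => hg0 x (hsub hs hx)).symm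
  calc ∫⁻ s in Ioo a b, ENNReal.ofReal (g s) * (∫⁻ x in Ioo s b, ENNReal.ofReal (g x)) ^ j
      = ∫⁻ s in Ioo a b, ENNReal.ofReal (g s * (∫ x in s..b, g x) ^ j) := by
        refine setLIntegral_congr_fun measurableSet_Ioo fun s hs => ?_
        have hs' := Ioo_subset_Icc_self hs
        rw [hΦ hs', ← ENNReal.ofReal_pow (hΦ0 hs'), ENNReal.ofReal_mul (hg0 s hs')]
    _ = ENNReal.ofReal (∫ s in a..b, g s * (∫ x in s..b, g x) ^ j) :=
        (ofReal_intervalIntegral_eq_setLIntegral_Ioo hab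
          (hg.mul ((continuousOn_intervalIntegral_left hab hg).pow j))
          fun s hs => mul_nonneg (hg0 s hs) (pow_nonneg (hΦ0 hs) j)).symm
    _ = ((j : ℝ≥0∞) + 1)⁻¹ * (∫⁻ x in Ioo a b, ENNReal.ofReal (g x)) ^ (j + 1) := by
        rw [integral_mul_integral_pow_eq hab hg, hΦ (left_mem_Icc.2 hab), div_eq_inv_mul,
          ENNReal.ofReal_mul (by positivity), ← ENNReal.ofReal_pow (hΦ0 (left_mem_Icc.2 hab)),
          ENNReal.ofReal_inv_of_pos (by positivity)]
        norm_cast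

theorem ENNReal.inv_factorial_mul_inv_succ (j : ℕ) :
    (j.factorial : ℝ≥0∞)⁻¹ * ((j : ℝ≥0∞) + 1)⁻¹ = ((j + 1).factorial : ℝ≥0∞)⁻¹ := by
  rw [Nat.factorial_succ, Nat.cast_mul, mul_comm, ENNReal.mul_inv (by simp) (by simp)]
  push_cast
  rfl

section phi

variable (n : ℕ) (γ : ℝ)

theorem measurable_phi : Measurable (phi n γ) := by
  unfold phi
  fun_prop

theorem continuousOn_phi : ContinuousOn (phi n γ) (Ioi 0) :=
  ContinuousOn.inf (continuousOn_id.rpow_const fun _ hx => Or.inl (ne_of_gt hx))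
    (continuousOn_id.inv₀ fun _ hx => ne_of_gt hx)

theorem phi_nonneg {s : ℝ} (hs : 0 ≤ s) : 0 ≤ phi n γ s :=
  le_min (Real.rpow_nonneg hs _) (inv_nonneg.2 hs)

theorem measurable_setLIntegral_Ioo_phi :
    Measurable fun p : ℝ × ℝ => ∫⁻ x in Ioo p.1 p.2, ENNReal.ofReal (phi n γ x) :=
  measurable_setLIntegral_Ioo (measurable_phi n γ).ennreal_ofReal

theorem ofReal_setIntegral_Ioo_phi_pow {a : ℝ} (b : ℝ) (ha : 0 < a) (j : ℕ) :
    ENNReal.ofReal ((∫ x in Ioo a b, phi n γ x) ^ j) =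
      (∫⁻ x in Ioo a b, ENNReal.ofReal (phi n γ x)) ^ j := by
  have hphi0 : ∀ x ∈ Ioo a b, 0 ≤ phi n γ x := fun _ hx => phi_nonneg n γ (ha.trans hx.1).le
  rw [ENNReal.ofReal_pow (setIntegral_nonneg measurableSet_Ioo hphi0),
    ofReal_setIntegral_eq_setLIntegral_ofReal measurableSet_Ioo
      (((continuousOn_phi n γ).mono fun _ hx => ha.trans_le hx.1).integrableOn_Icc.mono_set
        Ioo_subset_Icc_self) hphi0]

theorem setLIntegral_phi_mul_pow_eq {a b : ℝ} (ha : 0 < a) (hab : a ≤ b) (j : ℕ) :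
    ∫⁻ s in Ioo a b, ENNReal.ofReal (phi n γ s) *
        (∫⁻ x in Ioo s b, ENNReal.ofReal (phi n γ x)) ^ j =
      ((j : ℝ≥0∞) + 1)⁻¹ * (∫⁻ x in Ioo a b, ENNReal.ofReal (phi n γ x)) ^ (j + 1) :=
  setLIntegral_ofReal_mul_pow_eq hab ((continuousOn_phi n γ).mono fun _ hx => ha.trans_le hx.1)
    (fun _ hx => phi_nonneg n γ (ha.le.trans hx.1)) j

theorem measurable_Rop {f : ℝ → ℝ≥0∞} (hf : Measurable f) : Measurable (Rop n γ f) :=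
  (measurable_phi n γ).ennreal_ofReal.mul
    ((measurable_setLIntegral_Ioo hf).comp (measurable_const.prodMk measurable_id))

end phi

section iterates

variable (n : ℕ) (α : ℝ)

theorem setLIntegral_Rop_mul_pow {f : ℝ → ℝ≥0∞} (hf : Measurable f) (t : ℝ) (j : ℕ) :
    ∫⁻ s in Ioo 0 t, Rop n α f s * (∫⁻ x in Ioo s t, ENNReal.ofReal (phi n α x)) ^ j =
      ((j : ℝ≥0∞) + 1)⁻¹ *
        ∫⁻ u in Ioo 0 t, f u * (∫⁻ x in Ioo u t, ENNReal.ofReal (phi n α x)) ^ (j + 1) := by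
  set w : ℝ → ℝ≥0∞ := fun s =>
    ENNReal.ofReal (phi n α s) * (∫⁻ x in Ioo s t, ENNReal.ofReal (phi n α x)) ^ j
  have hw : Measurable w := (measurable_phi n α).ennreal_ofReal.mul <|
    ((measurable_setLIntegral_Ioo_phi n α).comp (measurable_id.prodMk measurable_const)).pow_const j
  calc ∫⁻ s in Ioo 0 t, Rop n α f s * (∫⁻ x in Ioo s t, ENNReal.ofReal (phi n α x)) ^ j
      = ∫⁻ s in Ioo 0 t, ∫⁻ u in Ioo 0 s, f u * w s := by
        refine lintegral_congr fun s => ?_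
        rw [Rop, lintegral_mul_const _ hf]
        ring
    _ = ∫⁻ u in Ioo 0 t, f u * ∫⁻ s in Ioo u t, w s := by
        rw [lintegral_Ioo_lintegral_Ioo_swap (F := fun s u => f u * w s)
          ((hf.comp measurable_snd).mul (hw.comp measurable_fst))]
        exact lintegral_congr fun u => lintegral_const_mul _ hw
    _ = ∫⁻ u in Ioo 0 t, ((j : ℝ≥0∞) + 1)⁻¹ *
          (f u * (∫⁻ x in Ioo u t, ENNReal.ofReal (phi n α x)) ^ (j + 1)) := by
        refine setLIntegral_congr_fun measurableSet_Ioo fun u hu => ?_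
        rw [setLIntegral_phi_mul_pow_eq n α hu.1 hu.2.le, mul_left_comm]
    _ = _ := lintegral_const_mul' _ _ (by simp)

theorem setLIntegral_Ioo_iterate_Rop (j : ℕ) {f : ℝ → ℝ≥0∞} (hf : Measurable f) (t : ℝ) :
    ∫⁻ s in Ioo 0 t, (Rop n α)^[j] f s =
      (j.factorial : ℝ≥0∞)⁻¹ *
        ∫⁻ s in Ioo 0 t, f s * (∫⁻ x in Ioo s t, ENNReal.ofReal (phi n α x)) ^ j := by
  induction j generalizing f with
  | zero => simp
  | succ j ih =>
    rw [Function.iterate_succ_apply, ih (measurable_Rop n α hf), setLIntegral_Rop_mul_pow n α hf,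
      ← mul_assoc, ENNReal.inv_factorial_mul_inv_succ]

theorem setLIntegral_Ioi_setLIntegral_Ioi_mul_phi {g : ℝ → ℝ≥0∞} (hg : Measurable g) {t : ℝ}
    (ht : 0 < t) (j : ℕ) :
    ∫⁻ s in Ioi t,
        (∫⁻ u in Ioi s, g u * (∫⁻ x in Ioo s u, ENNReal.ofReal (phi n α x)) ^ j) *
          ENNReal.ofReal (phi n α s) =
      ((j : ℝ≥0∞) + 1)⁻¹ *
        ∫⁻ u in Ioi t, g u * (∫⁻ x in Ioo t u, ENNReal.ofReal (phi n α x)) ^ (j + 1) := by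
  set w : ℝ → ℝ → ℝ≥0∞ := fun s u =>
    ENNReal.ofReal (phi n α s) * (∫⁻ x in Ioo s u, ENNReal.ofReal (phi n α x)) ^ j
  have hw : Measurable (Function.uncurry w) :=
    ((measurable_phi n α).ennreal_ofReal.comp measurable_fst).mul
      ((measurable_setLIntegral_Ioo_phi n α).pow_const j)
  calc ∫⁻ s in Ioi t,
        (∫⁻ u in Ioi s, g u * (∫⁻ x in Ioo s u, ENNReal.ofReal (phi n α x)) ^ j) *
          ENNReal.ofReal (phi n α s)
      = ∫⁻ s in Ioi t, ∫⁻ u in Ioi s, g u * w s u := by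
        refine lintegral_congr fun s => ?_
        rw [← lintegral_mul_const' _ _ ENNReal.ofReal_ne_top]
        exact lintegral_congr fun u => by ring
    _ = ∫⁻ u in Ioi t, g u * ∫⁻ s in Ioo t u, w s u := by
        rw [lintegral_Ioi_lintegral_Ioi_swap (F := fun s u => g u * w s u)
          ((hg.comp measurable_snd).mul hw)]
        exact lintegral_congr fun u =>
          lintegral_const_mul _ (hw.comp (measurable_id.prodMk measurable_const))
    _ = ∫⁻ u in Ioi t, ((j : ℝ≥0∞) + 1)⁻¹ *
          (g u * (∫⁻ x in Ioo t u, ENNReal.ofReal (phi n α x)) ^ (j + 1)) := by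
        refine setLIntegral_congr_fun measurableSet_Ioi fun u hu => ?_
        rw [setLIntegral_phi_mul_pow_eq n α ht (le_of_lt hu), mul_left_comm]
    _ = _ := lintegral_const_mul' _ _ (by simp)

theorem iterate_Hop_setLIntegral_Ioi (j : ℕ) {g : ℝ → ℝ≥0∞} (hg : Measurable g) {t : ℝ}
    (ht : 0 < t) :
    (Hop n α)^[j] (fun t => ∫⁻ s in Ioi t, g s) t =
      (j.factorial : ℝ≥0∞)⁻¹ *
        ∫⁻ s in Ioi t, g s * (∫⁻ x in Ioo t s, ENNReal.ofReal (phi n α x)) ^ j := by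
  induction j generalizing t with
  | zero => simp
  | succ j ih =>
    rw [Function.iterate_succ_apply', Hop]
    calc ∫⁻ s in Ioi t,
          (Hop n α)^[j] (fun t => ∫⁻ s in Ioi t, g s) s * ENNReal.ofReal (phi n α s)
        = (j.factorial : ℝ≥0∞)⁻¹ * ∫⁻ s in Ioi t,
            (∫⁻ u in Ioi s, g u * (∫⁻ x in Ioo s u, ENNReal.ofReal (phi n α x)) ^ j) *
              ENNReal.ofReal (phi n α s) := by
          rw [← lintegral_const_mul' _ _ (by simp [Nat.factorial_ne_zero])]
          refine setLIntegral_congr_fun measurableSet_Ioi fun s hs => ?_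
          rw [ih (ht.trans hs), mul_assoc]
      _ = _ := by
          rw [setLIntegral_Ioi_setLIntegral_Ioi_mul_phi n α hg ht, ← mul_assoc,
            ENNReal.inv_factorial_mul_inv_succ]

end iterates

theorem stmt5_general (n : ℕ) (α β : ℝ)
    (j : ℕ) (f : ℝ → ℝ≥0∞) (hf : Measurable f) (t : ℝ) (ht : 0 < t) :
    Rop n β ((Rop n α)^[j] f) t =
      ENNReal.ofReal (phi n β t / (Nat.factorial j : ℝ)) *
        (∫⁻ s in Ioo (0 : ℝ) t,
          f s * ENNReal.ofReal ((∫ x in Ioo s t, phi n α x) ^ j)) ∧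
    (Hop n α)^[j] (Hop n β f) t =
      ENNReal.ofReal ((Nat.factorial j : ℝ)⁻¹) *
        ∫⁻ s in Ioi t,
          f s * ENNReal.ofReal (phi n β s * (∫ x in Ioo t s, phi n α x) ^ j) := by
  have hfac : ENNReal.ofReal (j.factorial : ℝ) = j.factorial := ENNReal.ofReal_natCast _
  constructor
  · rw [Rop, setLIntegral_Ioo_iterate_Rop n α j hf, div_eq_mul_inv,
      ENNReal.ofReal_mul (phi_nonneg n β ht.le), ENNReal.ofReal_inv_of_pos (by positivity), hfac,
      mul_assoc]
    refine congrArg _ (congrArg _ (setLIntegral_congr_fun measurableSet_Ioo fun s hs => ?_))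
    rw [ofReal_setIntegral_Ioo_phi_pow n α t hs.1]
  · rw [ENNReal.ofReal_inv_of_pos (by positivity), hfac]
    refine (iterate_Hop_setLIntegral_Ioi n α j (hf.mul (measurable_phi n β).ennreal_ofReal)
      ht).trans (congrArg _ (setLIntegral_congr_fun measurableSet_Ioi fun s hs => ?_))
    rw [ENNReal.ofReal_mul (phi_nonneg n β (ht.trans hs).le),
      ofReal_setIntegral_Ioo_phi_pow n α s ht, Pi.mul_apply, mul_assoc]

theorem stmt5 (n : ℕ) (hn : 2 ≤ n) (α β : ℝ)
    (hα0 : 0 ≤ α) (hαn : α < n) (hβ0 : 0 ≤ β) (hβn : β < n)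
    (j : ℕ) (f : ℝ → ℝ≥0∞) (hf : Measurable f) (t : ℝ) (ht : 0 < t) :
    Rop n β ((Rop n α)^[j] f) t =
      ENNReal.ofReal (phi n β t / (Nat.factorial j : ℝ)) *
        (∫⁻ s in Ioo (0 : ℝ) t,
          f s * ENNReal.ofReal ((∫ x in Ioo s t, phi n α x) ^ j)) ∧
    (Hop n α)^[j] (Hop n β f) t =
      ENNReal.ofReal ((Nat.factorial j : ℝ)⁻¹) *
        ∫⁻ s in Ioi t,
          f s * ENNReal.ofReal (phi n β s * (∫ x in Ioo t s, phi n α x) ^ j) :=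
  stmt5_general n α β j f hf t ht
end

section
/- For every nonincreasing nonnegative f on (0,∞) and every t ∈ (0,1): c·R_m f(t) ≤ (R_β ∘ R_2^k) f(t) ≤ C·R_m f(t), where m = 2k + β, k ∈ ℕ₀, β ∈ {1,2}, m < n, with constants c, C depending only on n and m. -/
open MeasureTheory Set Real
open scoped ENNReal

/-!
On `(0, 1)` the weight of `R_γ` is the power `t ^ (-1 + γ/n)`, so everything reduces to the
primitives `F t = ∫₀ᵗ f`. For nonincreasing `f` the mean `F t / t` is nonincreasing, i.e.
`(s/t) F t ≤ F s ≤ F t` for `s ≤ t`. Feeding a two-sided bound `∫₀ˢ g ≍ s^a ∫₀ˢ f` through one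
more application of `R_γ` and integrating the powers of `s` therefore gives
`∫₀ᵗ R_γ g ≍ t^(a + γ/n) ∫₀ᵗ f`. By induction `∫₀ᵗ R_2^k f ≍ t^(2k/n) ∫₀ᵗ f`, and multiplying by
`t^(-1 + β/n)` yields `R_β R_2^k f ≍ R_m f` with `m = 2k + β`.
-/

lemma ENNReal.ofReal_rpow_add {s : ℝ} (hs : 0 < s) (p q : ℝ) :
    ENNReal.ofReal (s ^ (p + q)) = ENNReal.ofReal (s ^ p) * ENNReal.ofReal (s ^ q) := by
  rw [Real.rpow_add hs, ENNReal.ofReal_mul (by positivity)]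

lemma setLIntegral_Ioo_rpow {a t : ℝ} (ha : -1 < a) (ht : 0 < t) :
    ∫⁻ s in Ioo (0 : ℝ) t, ENNReal.ofReal (s ^ a) = ENNReal.ofReal (t ^ (a + 1) / (a + 1)) := by
  rw [Measure.restrict_congr_set Ioo_ae_eq_Ioc]
  have hint : IntegrableOn (fun s : ℝ => s ^ a) (Ioc 0 t) :=
    (intervalIntegrable_iff_integrableOn_Ioc_of_le ht.le).mp
      (intervalIntegral.intervalIntegrable_rpow' ha)
  rw [← ofReal_integral_eq_lintegral_ofReal hint ?_]
  · rw [← intervalIntegral.integral_of_le ht.le, integral_rpow (Or.inl ha),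
      Real.zero_rpow (by linarith), sub_zero]
  · filter_upwards [ae_restrict_mem measurableSet_Ioc] with x hx
    exact Real.rpow_nonneg hx.1.le _

lemma ofReal_mul_setLIntegral_Ioo_le_of_antitoneOn {f : ℝ → ℝ≥0∞} (hf : AntitoneOn f (Ioi 0))
    {s t : ℝ} (hs : 0 < s) (hst : s ≤ t) :
    ENNReal.ofReal s * ∫⁻ x in Ioo (0 : ℝ) t, f x
      ≤ ENNReal.ofReal t * ∫⁻ x in Ioo (0 : ℝ) s, f x := by
  have hsplit : ∫⁻ x in Ioo (0 : ℝ) t, f x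
      = (∫⁻ x in Ioo (0 : ℝ) s, f x) + ∫⁻ x in Ico s t, f x := by
    rw [← lintegral_union measurableSet_Ico
      (Ico_disjoint_Ico_same.mono_left Ioo_subset_Ico_self), Ioo_union_Ico_eq_Ioo hs hst]
  have htail : ∫⁻ x in Ico s t, f x ≤ ENNReal.ofReal (t - s) * f s :=
    calc ∫⁻ x in Ico s t, f x ≤ ∫⁻ _ in Ico s t, f s :=
          setLIntegral_mono' measurableSet_Ico fun x hx => hf hs (hs.trans_le hx.1) hx.1
      _ = ENNReal.ofReal (t - s) * f s := by rw [setLIntegral_const, Real.volume_Ico, mul_comm]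
  have hhead : ENNReal.ofReal s * f s ≤ ∫⁻ x in Ioo (0 : ℝ) s, f x :=
    calc ENNReal.ofReal s * f s = ∫⁻ _ in Ioo (0 : ℝ) s, f s := by
          rw [setLIntegral_const, Real.volume_Ioo, sub_zero, mul_comm]
      _ ≤ ∫⁻ x in Ioo (0 : ℝ) s, f x :=
          setLIntegral_mono' measurableSet_Ioo fun x hx => hf hx.1 hs hx.2.le
  calc ENNReal.ofReal s * ∫⁻ x in Ioo (0 : ℝ) t, f x
      = ENNReal.ofReal s * (∫⁻ x in Ioo (0 : ℝ) s, f x)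
          + ENNReal.ofReal s * ∫⁻ x in Ico s t, f x := by rw [hsplit, mul_add]
    _ ≤ ENNReal.ofReal s * (∫⁻ x in Ioo (0 : ℝ) s, f x)
          + ENNReal.ofReal s * (ENNReal.ofReal (t - s) * f s) := by gcongr
    _ = ENNReal.ofReal s * (∫⁻ x in Ioo (0 : ℝ) s, f x)
          + ENNReal.ofReal (t - s) * (ENNReal.ofReal s * f s) := by ring
    _ ≤ ENNReal.ofReal s * (∫⁻ x in Ioo (0 : ℝ) s, f x)
          + ENNReal.ofReal (t - s) * ∫⁻ x in Ioo (0 : ℝ) s, f x := by gcongr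
    _ = ENNReal.ofReal t * ∫⁻ x in Ioo (0 : ℝ) s, f x := by
        rw [← add_mul, ← ENNReal.ofReal_add hs.le (sub_nonneg.2 hst), add_sub_cancel]

lemma phi_eq_rpow {n : ℕ} {γ t : ℝ} (hγ : 0 ≤ γ) (ht0 : 0 < t) (ht1 : t ≤ 1) :
    phi n γ t = t ^ (-1 + γ / n) := by
  refine min_eq_left ?_
  rw [← Real.rpow_neg_one t]
  exact Real.rpow_le_rpow_of_exponent_ge ht0 ht1 (by linarith [div_nonneg hγ n.cast_nonneg])

lemma Rop_eq {n : ℕ} {γ t : ℝ} (hγ : 0 ≤ γ) (ht0 : 0 < t) (ht1 : t ≤ 1) (g : ℝ → ℝ≥0∞) :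
    Rop n γ g t = ENNReal.ofReal (t ^ (-1 + γ / n)) * ∫⁻ s in Ioo (0 : ℝ) t, g s := by
  rw [Rop, phi_eq_rpow hγ ht0 ht1]

lemma le_setLIntegral_Rop {n : ℕ} {γ a : ℝ} (hγ : 0 ≤ γ) (he : -1 < a + γ / n)
    {f g : ℝ → ℝ≥0∞} {c : ℝ≥0∞} (hf : AntitoneOn f (Ioi 0))
    (hg : ∀ s ∈ Ioo (0 : ℝ) 1,
      c * ENNReal.ofReal (s ^ a) * ∫⁻ x in Ioo (0 : ℝ) s, f x ≤ ∫⁻ x in Ioo (0 : ℝ) s, g x)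
    {t : ℝ} (ht : t ∈ Ioo (0 : ℝ) 1) :
    c * ENNReal.ofReal (a + γ / n + 1)⁻¹ * ENNReal.ofReal (t ^ (a + γ / n))
        * ∫⁻ x in Ioo (0 : ℝ) t, f x
      ≤ ∫⁻ s in Ioo (0 : ℝ) t, Rop n γ g s := by
  set e := a + γ / n
  set F := ∫⁻ x in Ioo (0 : ℝ) t, f x
  have hpt : ∀ s ∈ Ioo (0 : ℝ) t,
      c * ENNReal.ofReal t⁻¹ * F * ENNReal.ofReal (s ^ e) ≤ Rop n γ g s := by
    intro s hs
    have hs1 : s < 1 := hs.2.trans ht.2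
    calc c * ENNReal.ofReal t⁻¹ * F * ENNReal.ofReal (s ^ e)
        = ENNReal.ofReal (s ^ (-1 + γ / n)) * (c * ENNReal.ofReal (s ^ a))
            * (ENNReal.ofReal t⁻¹ * (ENNReal.ofReal s * F)) := by
          rw [show e = -1 + γ / n + a + 1 by ring, ENNReal.ofReal_rpow_add hs.1,
            ENNReal.ofReal_rpow_add hs.1, Real.rpow_one]
          ring
      _ ≤ ENNReal.ofReal (s ^ (-1 + γ / n)) * (c * ENNReal.ofReal (s ^ a))
            * (ENNReal.ofReal t⁻¹ * (ENNReal.ofReal t * ∫⁻ x in Ioo (0 : ℝ) s, f x)) := by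
          gcongr _ * (_ * ?_)
          exact ofReal_mul_setLIntegral_Ioo_le_of_antitoneOn hf hs.1 hs.2.le
      _ = ENNReal.ofReal (s ^ (-1 + γ / n))
            * (c * ENNReal.ofReal (s ^ a) * ∫⁻ x in Ioo (0 : ℝ) s, f x) := by
          rw [← mul_assoc (ENNReal.ofReal t⁻¹), ← ENNReal.ofReal_mul (inv_nonneg.2 ht.1.le),
            inv_mul_cancel₀ ht.1.ne', ENNReal.ofReal_one, one_mul]
          ring
      _ ≤ Rop n γ g s := by
          rw [Rop_eq hγ hs.1 hs1.le]
          gcongr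
          exact hg s ⟨hs.1, hs1⟩
  calc c * ENNReal.ofReal (e + 1)⁻¹ * ENNReal.ofReal (t ^ e) * F
      = c * ENNReal.ofReal t⁻¹ * F * ENNReal.ofReal (t ^ (e + 1) / (e + 1)) := by
        have hweight : ENNReal.ofReal (e + 1)⁻¹ * ENNReal.ofReal (t ^ e)
            = ENNReal.ofReal t⁻¹ * ENNReal.ofReal (t ^ (e + 1) / (e + 1)) := by
          rw [← ENNReal.ofReal_mul (inv_nonneg.2 (by linarith)),
            ← ENNReal.ofReal_mul (inv_nonneg.2 ht.1.le), Real.rpow_add_one ht.1.ne']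
          congr 1
          field_simp [ht.1.ne']
        rw [mul_assoc c, hweight]
        ring
    _ = ∫⁻ s in Ioo (0 : ℝ) t, c * ENNReal.ofReal t⁻¹ * F * ENNReal.ofReal (s ^ e) := by
        rw [lintegral_const_mul _ (by fun_prop), setLIntegral_Ioo_rpow he ht.1]
    _ ≤ ∫⁻ s in Ioo (0 : ℝ) t, Rop n γ g s := setLIntegral_mono' measurableSet_Ioo hpt

lemma setLIntegral_Rop_le {n : ℕ} {γ a : ℝ} (hγ : 0 ≤ γ) (he : 0 < a + γ / n)
    {f g : ℝ → ℝ≥0∞} {C : ℝ≥0∞}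
    (hg : ∀ s ∈ Ioo (0 : ℝ) 1,
      ∫⁻ x in Ioo (0 : ℝ) s, g x ≤ C * ENNReal.ofReal (s ^ a) * ∫⁻ x in Ioo (0 : ℝ) s, f x)
    {t : ℝ} (ht : t ∈ Ioo (0 : ℝ) 1) :
    ∫⁻ s in Ioo (0 : ℝ) t, Rop n γ g s
      ≤ C * ENNReal.ofReal (a + γ / n)⁻¹ * ENNReal.ofReal (t ^ (a + γ / n))
        * ∫⁻ x in Ioo (0 : ℝ) t, f x := by
  set e := a + γ / n
  set F := ∫⁻ x in Ioo (0 : ℝ) t, f x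
  have hpt : ∀ s ∈ Ioo (0 : ℝ) t, Rop n γ g s ≤ C * F * ENNReal.ofReal (s ^ (e - 1)) := by
    intro s hs
    have hs1 : s < 1 := hs.2.trans ht.2
    calc Rop n γ g s
        ≤ ENNReal.ofReal (s ^ (-1 + γ / n)) * (C * ENNReal.ofReal (s ^ a) * F) := by
          rw [Rop_eq hγ hs.1 hs1.le]
          gcongr
          refine (hg s ⟨hs.1, hs1⟩).trans ?_
          gcongr
          exact lintegral_mono_set (Ioo_subset_Ioo_right hs.2.le)
      _ = C * F * ENNReal.ofReal (s ^ (e - 1)) := by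
          rw [show e - 1 = -1 + γ / n + a by ring, ENNReal.ofReal_rpow_add hs.1 (-1 + γ / n) a]
          ring
  calc ∫⁻ s in Ioo (0 : ℝ) t, Rop n γ g s
      ≤ ∫⁻ s in Ioo (0 : ℝ) t, C * F * ENNReal.ofReal (s ^ (e - 1)) :=
        setLIntegral_mono' measurableSet_Ioo hpt
    _ = C * F * ENNReal.ofReal (t ^ e / e) := by
        rw [lintegral_const_mul _ (by fun_prop), setLIntegral_Ioo_rpow (by linarith) ht.1,
          sub_add_cancel]
    _ = C * ENNReal.ofReal e⁻¹ * ENNReal.ofReal (t ^ e) * F := by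
        rw [div_eq_mul_inv, ENNReal.ofReal_mul (Real.rpow_nonneg ht.1.le _)]
        ring

theorem setLIntegral_iterate_Rop_comparable {n : ℕ} (hn : 0 < n) {γ : ℝ} (hγ : 0 < γ) (j : ℕ) :
    ∃ c C : ℝ, 0 < c ∧ 0 < C ∧ ∀ f : ℝ → ℝ≥0∞, AntitoneOn f (Ioi 0) → ∀ t ∈ Ioo (0 : ℝ) 1,
      ENNReal.ofReal c * ENNReal.ofReal (t ^ (j * γ / n)) * ∫⁻ x in Ioo (0 : ℝ) t, f x
          ≤ ∫⁻ x in Ioo (0 : ℝ) t, (Rop n γ)^[j] f x ∧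
        ∫⁻ x in Ioo (0 : ℝ) t, (Rop n γ)^[j] f x
          ≤ ENNReal.ofReal C * ENNReal.ofReal (t ^ (j * γ / n)) * ∫⁻ x in Ioo (0 : ℝ) t, f x := by
  induction j with
  | zero => exact ⟨1, 1, one_pos, one_pos, fun f _ t _ => by simp⟩
  | succ j ih =>
    obtain ⟨c, C, hc, hC, H⟩ := ih
    have he : 0 < j * γ / n + γ / n := by positivity
    refine ⟨c * (j * γ / n + γ / n + 1)⁻¹, C * (j * γ / n + γ / n)⁻¹, by positivity,
      by positivity, fun f hf t ht => ?_⟩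
    rw [Function.iterate_succ_apply', show ((j + 1 : ℕ) : ℝ) * γ / n = j * γ / n + γ / n by
      push_cast; ring, ENNReal.ofReal_mul hc.le, ENNReal.ofReal_mul hC.le]
    exact ⟨le_setLIntegral_Rop hγ.le (by linarith) hf (fun s hs => (H f hf s hs).1) ht,
      setLIntegral_Rop_le hγ.le he (fun s hs => (H f hf s hs).2) ht⟩

theorem stmt16_general (n : ℕ) (hn : 2 ≤ n) (k : ℕ) (β : ℝ) (hβ : β = 1 ∨ β = 2)
    (m : ℝ) (hm : m = 2 * k + β) :
    ∃ c C : ℝ, 0 < c ∧ 0 < C ∧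
      ∀ f : ℝ → ℝ≥0∞, Measurable f → AntitoneOn f (Ioi 0) →
        ∀ t ∈ Ioo (0 : ℝ) 1,
          ENNReal.ofReal c * Rop n m f t ≤ Rop n β ((Rop n 2)^[k] f) t ∧
            Rop n β ((Rop n 2)^[k] f) t ≤ ENNReal.ofReal C * Rop n m f t := by
  obtain ⟨c, C, hc, hC, H⟩ := setLIntegral_iterate_Rop_comparable (by omega : 0 < n) two_pos k
  have hβ0 : 0 ≤ β := by rcases hβ with rfl | rfl <;> norm_num
  refine ⟨c, C, hc, hC, fun f _ hf t ht => ?_⟩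
  have hweight : ENNReal.ofReal (t ^ (-1 + m / n))
      = ENNReal.ofReal (t ^ (-1 + β / n)) * ENNReal.ofReal (t ^ ((k : ℝ) * 2 / n)) := by
    rw [← ENNReal.ofReal_rpow_add ht.1, hm]
    ring_nf
  rw [Rop_eq hβ0 ht.1 ht.2.le, Rop_eq (by rw [hm]; positivity) ht.1 ht.2.le, hweight]
  obtain ⟨hlower, hupper⟩ := H f hf t ht
  exact ⟨(by ring : _ = _).trans_le (mul_le_mul_right hlower _),
    (mul_le_mul_right hupper _).trans_eq (by ring)⟩

theorem stmt16 (n : ℕ) (hn : 2 ≤ n) (k : ℕ) (β : ℝ) (hβ : β = 1 ∨ β = 2)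
    (m : ℝ) (hm : m = 2 * k + β) (hmn : m < n) :
    ∃ c C : ℝ, 0 < c ∧ 0 < C ∧
      ∀ f : ℝ → ℝ≥0∞, Measurable f → AntitoneOn f (Ioi 0) →
        ∀ t ∈ Ioo (0 : ℝ) 1,
          ENNReal.ofReal c * Rop n m f t ≤ Rop n β ((Rop n 2)^[k] f) t ∧
            Rop n β ((Rop n 2)^[k] f) t ≤ ENNReal.ofReal C * Rop n m f t :=
  stmt16_general n hn k β hβ m hm
end
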